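/- arXiv:2312.01831 — 5 statements merged into one kernel-verified Lean document; each statement's English description precedes it below -/
import Mathlib

section
/- Let n, m ≥ 1 and let M be a real matrix indexed by (ZMod n × ZMod m) × (ZMod n × ZMod m), viewed as a linear map on images x : ZMod n × ZMod m → ℝ. Suppose M is equivariant to all 2-dimensional cyclic shifts (i.e., M commutes with every shift operator S_{a,b} defined by (S_{a,b} x)(i,j) = x(i−a, j−b) for (a,b) ∈ ZMod n × ZMod m) and equivariant to the vertical and horizontal reflections (i.e., M commutes with R₁ and R₂ defined by (R₁ x)(i,j) = x(−i, j) and (R₂ x)(i,j) = x(i, −j)). Then M is symmetric: Mᵀ = M. -/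
open Matrix

/-- A linear denoiser on images `x : ZMod n × ZMod m → ℝ` that is equivariant to all
2-dimensional cyclic shifts and to the vertical and horizontal reflections has a
symmetric Jacobian, i.e. the matrix is symmetric. -/
theorem equivariant_linear_denoiser_symmetric
    (n m : ℕ) [NeZero n] [NeZero m]
    (M : Matrix (ZMod n × ZMod m) (ZMod n × ZMod m) ℝ)
    (S : ZMod n × ZMod m → Matrix (ZMod n × ZMod m) (ZMod n × ZMod m) ℝ)
    (hS : ∀ (a : ZMod n × ZMod m) (p q : ZMod n × ZMod m),
      S a p q = if q = (p.1 - a.1, p.2 - a.2) then 1 else 0)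
    (R₁ R₂ : Matrix (ZMod n × ZMod m) (ZMod n × ZMod m) ℝ)
    (hR₁ : ∀ p q : ZMod n × ZMod m, R₁ p q = if q = (-p.1, p.2) then 1 else 0)
    (hR₂ : ∀ p q : ZMod n × ZMod m, R₂ p q = if q = (p.1, -p.2) then 1 else 0)
    (hshift : ∀ a : ZMod n × ZMod m, M * S a = S a * M)
    (hrefl₁ : M * R₁ = R₁ * M)
    (hrefl₂ : M * R₂ = R₂ * M) :
    Mᵀ = M := by
  have hS' : ∀ (a p q : ZMod n × ZMod m),
      S a p q = if p = (q.1 + a.1, q.2 + a.2) then 1 else 0 := by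
    intro a p q
    rw [hS]
    congr 1
    simp [Prod.ext_iff, eq_sub_iff_add_eq, eq_comm, sub_eq_iff_eq_add]
  have hR₁' : ∀ (p q : ZMod n × ZMod m),
      R₁ p q = if p = (-q.1, q.2) then 1 else 0 := by
    intro p q
    rw [hR₁]
    congr 1
    have hneg : ∀ (a b : ZMod n), (a = -b) ↔ (b = -a) :=
      fun a b => ⟨fun h => by rw [h, neg_neg], fun h => by rw [h, neg_neg]⟩
    simp only [Prod.ext_iff]
    rw [hneg q.1 p.1]
    exact propext ⟨fun ⟨h1, h2⟩ => ⟨h1, h2.symm⟩, fun ⟨h1, h2⟩ => ⟨h1, h2.symm⟩⟩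
  have hR₂' : ∀ (p q : ZMod n × ZMod m),
      R₂ p q = if p = (q.1, -q.2) then 1 else 0 := by
    intro p q
    rw [hR₂]
    congr 1
    have hneg : ∀ (a b : ZMod m), (a = -b) ↔ (b = -a) :=
      fun a b => ⟨fun h => by rw [h, neg_neg], fun h => by rw [h, neg_neg]⟩
    simp only [Prod.ext_iff]
    rw [hneg q.2 p.2]
    exact propext ⟨fun ⟨h1, h2⟩ => ⟨h1.symm, h2⟩, fun ⟨h1, h2⟩ => ⟨h1.symm, h2⟩⟩
  have key : ∀ (a p q : ZMod n × ZMod m),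
      M p (q.1 + a.1, q.2 + a.2) = M (p.1 - a.1, p.2 - a.2) q := by
    intro a p q
    have h := congrFun (congrFun (hshift a) p) q
    rw [mul_apply, mul_apply] at h
    calc M p (q.1 + a.1, q.2 + a.2)
        = ∑ r, M p r * S a r q := by
          rw [Finset.sum_congr rfl fun r _ => by rw [hS' a r q]]
          simp
      _ = ∑ r, S a p r * M r q := h
      _ = M (p.1 - a.1, p.2 - a.2) q := by
          rw [Finset.sum_congr rfl fun r _ => by rw [hS a p r]]
          simp
  have key1 : ∀ (p q : ZMod n × ZMod m), M p (-q.1, q.2) = M (-p.1, p.2) q := by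
    intro p q
    have h := congrFun (congrFun hrefl₁ p) q
    rw [mul_apply, mul_apply] at h
    calc M p (-q.1, q.2)
        = ∑ r, M p r * R₁ r q := by
          rw [Finset.sum_congr rfl fun r _ => by rw [hR₁' r q]]
          simp
      _ = ∑ r, R₁ p r * M r q := h
      _ = M (-p.1, p.2) q := by
          rw [Finset.sum_congr rfl fun r _ => by rw [hR₁ p r]]
          simp
  have key2 : ∀ (p q : ZMod n × ZMod m), M p (q.1, -q.2) = M (p.1, -p.2) q := by
    intro p q
    have h := congrFun (congrFun hrefl₂ p) q
    rw [mul_apply, mul_apply] at h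
    calc M p (q.1, -q.2)
        = ∑ r, M p r * R₂ r q := by
          rw [Finset.sum_congr rfl fun r _ => by rw [hR₂' r q]]
          simp
      _ = ∑ r, R₂ p r * M r q := h
      _ = M (p.1, -p.2) q := by
          rw [Finset.sum_congr rfl fun r _ => by rw [hR₂ p r]]
          simp
  ext p q
  rw [transpose_apply]
  calc M q p
      = M q (-q.1 + (p.1 + q.1), -q.2 + (p.2 + q.2)) := by ring_nf
    _ = M (q.1 - (p.1 + q.1), q.2 - (p.2 + q.2)) (-q.1, -q.2) :=
        key (p.1 + q.1, p.2 + q.2) q (-q.1, -q.2)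
    _ = M (-p.1, -p.2) (-q.1, -q.2) := by ring_nf
    _ = M (p.1, -p.2) (q.1, -q.2) := by
        simpa using key1 (-p.1, -p.2) (q.1, -q.2)
    _ = M p q := by
        simpa using key2 (p.1, -p.2) q
end

section
/- Let n ≥ 1, let G be a finite group and ρ : G → Matrix (Fin n) (Fin n) ℝ a group homomorphism into orthogonal matrices. Let M : Matrix (Fin n) (Fin n) ℝ with ℓ²-operator norm ‖M‖ > 0, and suppose there exist unit vectors u, v ∈ EuclideanSpace ℝ (Fin n) with M *ᵥ v = ‖M‖ • u, such that the top singular pair is unique up to sign: for every pair of unit vectors u', v' with M *ᵥ v' = ‖M‖ • u', either (u' = u and v' = v) or (u' = −u and v' = −v). If the principal component u vᵀ is not G-equivariant, i.e., there exists g ∈ G with (ρ(g) *ᵥ u) (ρ(g) *ᵥ v)ᵀ ≠ u vᵀ (outer products as matrices), then the group-averaged matrix M_G = (1/|G|) ∑_{g∈G} ρ(g) * M * ρ(g)ᵀ satisfies ‖M_G‖ < ‖M‖ in ℓ²-operator norm. -/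
open Matrix
open scoped Matrix.Norms.L2Operator


lemma teMul {n : ℕ} (A B : Matrix (Fin n) (Fin n) ℝ) (x : EuclideanSpace ℝ (Fin n)) :
    Matrix.toEuclideanLin (A * B) x = Matrix.toEuclideanLin A (Matrix.toEuclideanLin B x) := by
  simp [Matrix.toEuclideanLin_apply, Matrix.mulVec_mulVec]

lemma teOne {n : ℕ} (x : EuclideanSpace ℝ (Fin n)) :
    Matrix.toEuclideanLin (1 : Matrix (Fin n) (Fin n) ℝ) x = x := by
  simp [Matrix.toEuclideanLin_apply]

lemma teNorm {n : ℕ} {A : Matrix (Fin n) (Fin n) ℝ} (hA : Aᵀ * A = 1)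
    (x : EuclideanSpace ℝ (Fin n)) : ‖Matrix.toEuclideanLin A x‖ = ‖x‖ := by
  have h : @inner ℝ _ _ (Matrix.toEuclideanLin A x) (Matrix.toEuclideanLin A x)
      = @inner ℝ _ _ x x := by
    simp only [Matrix.toEuclideanLin_apply]
    rw [EuclideanSpace.inner_eq_star_dotProduct, EuclideanSpace.inner_eq_star_dotProduct]
    have : star (A *ᵥ x.ofLp) = A *ᵥ x.ofLp := rfl
    rw [this, Matrix.dotProduct_mulVec, ← Matrix.mulVec_transpose, Matrix.mulVec_mulVec, hA,
      Matrix.one_mulVec]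
    rfl
  rw [real_inner_self_eq_norm_sq, real_inner_self_eq_norm_sq] at h
  nlinarith [norm_nonneg ((Matrix.toEuclideanLin A) x), norm_nonneg x]

lemma teCLM {n : ℕ} (A : Matrix (Fin n) (Fin n) ℝ) (x : EuclideanSpace ℝ (Fin n)) :
    ((Matrix.toEuclideanLin (𝕜 := ℝ) (m := Fin n) (n := Fin n)).trans
      LinearMap.toContinuousLinearMap A) x = Matrix.toEuclideanLin A x := rfl

lemma teLe {n : ℕ} (A : Matrix (Fin n) (Fin n) ℝ) (x : EuclideanSpace ℝ (Fin n)) :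
    ‖Matrix.toEuclideanLin A x‖ ≤ ‖A‖ * ‖x‖ := by
  rw [← teCLM, Matrix.l2_opNorm_def]
  exact ContinuousLinearMap.le_opNorm _ x

lemma opNormOrth {n : ℕ} {A : Matrix (Fin n) (Fin n) ℝ} (hA : Aᵀ * A = 1) : ‖A‖ ≤ 1 := by
  rw [Matrix.l2_opNorm_def]
  apply ContinuousLinearMap.opNorm_le_bound _ zero_le_one
  intro x
  rw [one_mul, teCLM, teNorm hA]

lemma existsMax {n : ℕ} (hn : 1 ≤ n) (A : Matrix (Fin n) (Fin n) ℝ) :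
    ∃ x : EuclideanSpace ℝ (Fin n), ‖x‖ = 1 ∧ ‖Matrix.toEuclideanLin A x‖ = ‖A‖ := by
  set T := (Matrix.toEuclideanLin (𝕜 := ℝ) (m := Fin n) (n := Fin n)).trans
      LinearMap.toContinuousLinearMap A with hT
  have hnormdef : ‖A‖ = ‖T‖ := rfl
  have hne : (Metric.sphere (0 : EuclideanSpace ℝ (Fin n)) 1).Nonempty := by
    refine ⟨EuclideanSpace.single ⟨0, hn⟩ 1, ?_⟩
    rw [mem_sphere_zero_iff_norm, EuclideanSpace.norm_single, norm_one]
  obtain ⟨x₀, hx₀, hmax⟩ := (isCompact_sphere (0 : EuclideanSpace ℝ (Fin n)) 1).exists_isMaxOn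
    hne (T.continuous.norm.continuousOn)
  rw [mem_sphere_zero_iff_norm] at hx₀
  refine ⟨x₀, hx₀, le_antisymm ?_ ?_⟩
  · calc ‖Matrix.toEuclideanLin A x₀‖ = ‖T x₀‖ := rfl
    _ ≤ ‖T‖ * ‖x₀‖ := T.le_opNorm x₀
    _ = ‖A‖ := by rw [hx₀, mul_one, hnormdef]
  · rw [hnormdef]
    apply ContinuousLinearMap.opNorm_le_bound _ (norm_nonneg _)
    intro x
    rcases eq_or_ne x 0 with h | h
    · simp [h]
    · have hx : ‖x‖ ≠ 0 := norm_ne_zero_iff.mpr h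
      have hy : ‖(‖x‖⁻¹ • x : EuclideanSpace ℝ (Fin n))‖ = 1 := by
        rw [norm_smul, norm_inv, norm_norm, inv_mul_cancel₀ hx]
      have := hmax (mem_sphere_zero_iff_norm.mpr hy)
      have h2 : ‖T (‖x‖⁻¹ • x)‖ ≤ ‖T x₀‖ := this
      rw [T.map_smul, norm_smul, norm_inv, norm_norm] at h2
      calc ‖T x‖ = ‖x‖ * (‖x‖⁻¹ * ‖T x‖) := by field_simp
      _ ≤ ‖x‖ * ‖T x₀‖ := by
          apply mul_le_mul_of_nonneg_left _ (norm_nonneg x)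
          exact h2
      _ = ‖Matrix.toEuclideanLin A x₀‖ * ‖x‖ := by rw [mul_comm]; rfl

lemma smul_cancel_of_sq {X : Type*} [AddCommGroup X] [Module ℝ X] {s : ℝ} (hs : s * s = 1)
    {x y : X} (h : s • x = y) : x = s • y := by
  rw [← h, smul_smul, hs, one_smul]

set_option maxHeartbeats 1000000 in
/-- If the leading singular pair `(u, v)` of `M` (unique up to sign) gives a principal
component `u vᵀ` that is not `G`-equivariant, then the group average
`M_G = (1/|G|) ∑_g ρ(g) * M * ρ(g)ᵀ` has strictly smaller ℓ²-operator norm than `M`. -/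
theorem opNorm_group_average_lt_of_not_equivariant
    (n : ℕ) (hn : 1 ≤ n)
    (G : Type*) [Group G] [Fintype G]
    (ρ : G →* Matrix (Fin n) (Fin n) ℝ)
    (hρ : ∀ g : G, (ρ g)ᵀ * ρ g = 1)
    (M : Matrix (Fin n) (Fin n) ℝ)
    (hM : 0 < ‖M‖)
    (u v : EuclideanSpace ℝ (Fin n))
    (hu : ‖u‖ = 1) (hv : ‖v‖ = 1)
    (huv : Matrix.toEuclideanLin M v = ‖M‖ • u)
    (huniq : ∀ u' v' : EuclideanSpace ℝ (Fin n), ‖u'‖ = 1 → ‖v'‖ = 1 →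
      Matrix.toEuclideanLin M v' = ‖M‖ • u' →
      (u' = u ∧ v' = v) ∨ (u' = -u ∧ v' = -v))
    (hne : ∃ g : G,
      Matrix.vecMulVec (ρ g *ᵥ u) (ρ g *ᵥ v) ≠ Matrix.vecMulVec u v) :
    ‖(Fintype.card G : ℝ)⁻¹ • ∑ g : G, ρ g * M * (ρ g)ᵀ‖ < ‖M‖ := by
  by_contra hcon
  push_neg at hcon
  set c : ℝ := (Fintype.card G : ℝ)⁻¹ with hc
  have hcard : (0 : ℝ) < (Fintype.card G : ℝ) := by
    exact_mod_cast Fintype.card_pos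
  have hcpos : 0 < c := inv_pos.mpr hcard
  set MG : Matrix (Fin n) (Fin n) ℝ := c • ∑ g : G, ρ g * M * (ρ g)ᵀ with hMG
  -- orthogonality facts
  have horth2 : ∀ g : G, ρ g * (ρ g)ᵀ = 1 := fun g => mul_eq_one_comm.mp (hρ g)
  have horthT : ∀ g : G, ((ρ g)ᵀ)ᵀ * (ρ g)ᵀ = 1 := by
    intro g; rw [Matrix.transpose_transpose]; exact horth2 g
  -- each conjugate has norm ≤ ‖M‖
  have hconj : ∀ g : G, ‖ρ g * M * (ρ g)ᵀ‖ ≤ ‖M‖ := by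
    intro g
    calc ‖ρ g * M * (ρ g)ᵀ‖ ≤ ‖ρ g * M‖ * ‖(ρ g)ᵀ‖ := Matrix.l2_opNorm_mul _ _
    _ ≤ ‖ρ g * M‖ * 1 := by
        exact mul_le_mul_of_nonneg_left (opNormOrth (horthT g)) (norm_nonneg _)
    _ = ‖ρ g * M‖ := mul_one _
    _ ≤ ‖ρ g‖ * ‖M‖ := Matrix.l2_opNorm_mul _ _
    _ ≤ 1 * ‖M‖ := mul_le_mul_of_nonneg_right (opNormOrth (hρ g)) (norm_nonneg _)
    _ = ‖M‖ := one_mul _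
  -- maximizer
  obtain ⟨v', hv'1, hv'max⟩ := existsMax hn MG
  set w : EuclideanSpace ℝ (Fin n) := Matrix.toEuclideanLin MG v' with hwdef
  set wg : G → EuclideanSpace ℝ (Fin n) :=
    fun g => Matrix.toEuclideanLin (ρ g * M * (ρ g)ᵀ) v' with hwgdef
  have hw_ge : ‖M‖ ≤ ‖w‖ := by rw [hwdef, hv'max]; exact hcon
  have hwg_norm : ∀ g : G, ‖wg g‖ ≤ ‖M‖ := by
    intro g
    calc ‖wg g‖ ≤ ‖ρ g * M * (ρ g)ᵀ‖ * ‖v'‖ := teLe _ _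
    _ = ‖ρ g * M * (ρ g)ᵀ‖ := by rw [hv'1, mul_one]
    _ ≤ ‖M‖ := hconj g
  have hw_sum : w = c • ∑ g : G, wg g := by
    calc w = (c • Matrix.toEuclideanLin (∑ g : G, ρ g * M * (ρ g)ᵀ)) v' := by
          rw [hwdef, hMG, _root_.map_smul]
    _ = c • (Matrix.toEuclideanLin (∑ g : G, ρ g * M * (ρ g)ᵀ)) v' := rfl
    _ = c • ∑ g : G, wg g := by rw [map_sum, LinearMap.sum_apply]
  -- inner product bound
  have hinner_le : ∀ g : G, @inner ℝ _ _ (wg g) w ≤ ‖M‖ * ‖w‖ := by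
    intro g
    calc @inner ℝ _ _ (wg g) w ≤ ‖wg g‖ * ‖w‖ := real_inner_le_norm _ _
    _ ≤ ‖M‖ * ‖w‖ := mul_le_mul_of_nonneg_right (hwg_norm g) (norm_nonneg _)
  have hinner_sum : @inner ℝ _ _ w w = c * ∑ g : G, @inner ℝ _ _ (wg g) w := by
    have h0 : @inner ℝ _ _ w w = @inner ℝ _ _ (c • ∑ g : G, wg g) w := by rw [← hw_sum]
    rw [h0, real_inner_smul_left, sum_inner]
  have hw_le : ‖w‖ ≤ ‖M‖ := by
    have h1 : ‖w‖ ^ 2 ≤ ‖M‖ * ‖w‖ := by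
      rw [← real_inner_self_eq_norm_sq, hinner_sum]
      calc c * ∑ g : G, @inner ℝ _ _ (wg g) w
          ≤ c * ∑ _g : G, ‖M‖ * ‖w‖ := by
            apply mul_le_mul_of_nonneg_left _ (le_of_lt hcpos)
            exact Finset.sum_le_sum fun g _ => hinner_le g
      _ = c * ((Fintype.card G : ℝ) * (‖M‖ * ‖w‖)) := by
            rw [Finset.sum_const, Finset.card_univ, nsmul_eq_mul]
      _ = ‖M‖ * ‖w‖ := by rw [hc]; field_simp
    nlinarith [norm_nonneg w]
  have hw_eq : ‖w‖ = ‖M‖ := le_antisymm hw_le hw_ge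
  -- each inner product equals ‖M‖ ^ 2
  have hsum_eq : ∑ g : G, @inner ℝ _ _ (wg g) w = ∑ _g : G, ‖M‖ * ‖w‖ := by
    have h1 : @inner ℝ _ _ w w = ‖M‖ * ‖M‖ := by
      rw [real_inner_self_eq_norm_sq, hw_eq]; ring
    have h2 : c * ∑ g : G, @inner ℝ _ _ (wg g) w = ‖M‖ * ‖M‖ := by
      rw [← hinner_sum, h1]
    have h3 : ∑ _g : G, ‖M‖ * ‖w‖ = (Fintype.card G : ℝ) * (‖M‖ * ‖M‖) := by
      rw [Finset.sum_const, Finset.card_univ, nsmul_eq_mul, hw_eq]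
    rw [h3]
    have := congrArg (fun x => (Fintype.card G : ℝ) * x) h2
    simpa [hc, mul_assoc, mul_inv_cancel₀ (ne_of_gt hcard)] using this
  have hinner_eq : ∀ g : G, @inner ℝ _ _ (wg g) w = ‖M‖ * ‖w‖ := by
    intro g
    exact (Finset.sum_eq_sum_iff_of_le (fun i _ => hinner_le i)).mp hsum_eq g
      (Finset.mem_univ g)
  -- all wg equal w
  have hwg_eq : ∀ g : G, wg g = w := by
    intro g
    have h1 : ‖wg g - w‖ ^ 2 = ‖wg g‖ ^ 2 - 2 * @inner ℝ _ _ (wg g) w + ‖w‖ ^ 2 :=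
      norm_sub_sq_real _ _
    have h2 : ‖wg g - w‖ ^ 2 ≤ 0 := by
      rw [h1, hinner_eq g, hw_eq]
      nlinarith [hwg_norm g, norm_nonneg (wg g)]
    have h3 : ‖wg g - w‖ = 0 := by nlinarith [norm_nonneg (wg g - w)]
    exact sub_eq_zero.mp (norm_eq_zero.mp h3)
  -- w = M v'
  have hMv' : Matrix.toEuclideanLin M v' = w := by
    have := hwg_eq 1
    rw [hwgdef] at this
    simpa [_root_.map_one] using this
  have hMne : ‖M‖ ≠ 0 := ne_of_gt hM
  set u' : EuclideanSpace ℝ (Fin n) := ‖M‖⁻¹ • w with hu'def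
  have hu'1 : ‖u'‖ = 1 := by
    rw [hu'def, norm_smul, norm_inv, norm_norm, hw_eq, inv_mul_cancel₀ hMne]
  have hMv'' : Matrix.toEuclideanLin M v' = ‖M‖ • u' := by
    rw [hMv', hu'def, smul_smul, mul_inv_cancel₀ hMne, one_smul]
  -- first sign
  obtain ⟨ε, hε, hεu, hεv⟩ : ∃ ε : ℝ, ε * ε = 1 ∧ u' = ε • u ∧ v' = ε • v := by
    rcases huniq u' v' hu'1 hv'1 hMv'' with ⟨h1, h2⟩ | ⟨h1, h2⟩
    · exact ⟨1, by norm_num, by simp [h1], by simp [h2]⟩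
    · exact ⟨-1, by norm_num, by simp [h1], by simp [h2]⟩
  obtain ⟨g, hg⟩ := hne
  -- the key relation for g
  have hkey : Matrix.toEuclideanLin M (Matrix.toEuclideanLin (ρ g)ᵀ v')
      = ‖M‖ • Matrix.toEuclideanLin (ρ g)ᵀ u' := by
    have h1 : wg g = ‖M‖ • u' := by rw [hwg_eq g, ← hMv', hMv'']
    have h2 : Matrix.toEuclideanLin (ρ g)ᵀ (Matrix.toEuclideanLin (ρ g * M * (ρ g)ᵀ) v')
        = Matrix.toEuclideanLin (ρ g)ᵀ (‖M‖ • u') := congrArg _ h1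
    rw [← teMul, _root_.map_smul] at h2
    have h3 : (ρ g)ᵀ * (ρ g * M * (ρ g)ᵀ) = M * (ρ g)ᵀ := by
      rw [← mul_assoc, ← mul_assoc, hρ g, one_mul]
    rw [h3, teMul] at h2
    exact h2
  have hTnormu : ‖Matrix.toEuclideanLin (ρ g)ᵀ u'‖ = 1 := by
    rw [teNorm (horthT g), hu'1]
  have hTnormv : ‖Matrix.toEuclideanLin (ρ g)ᵀ v'‖ = 1 := by
    rw [teNorm (horthT g), hv'1]
  obtain ⟨δ, hδ, hδu, hδv⟩ : ∃ δ : ℝ, δ * δ = 1 ∧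
      Matrix.toEuclideanLin (ρ g)ᵀ u' = δ • u ∧ Matrix.toEuclideanLin (ρ g)ᵀ v' = δ • v := by
    rcases huniq _ _ hTnormu hTnormv hkey with ⟨h1, h2⟩ | ⟨h1, h2⟩
    · exact ⟨1, by norm_num, by simp [h1], by simp [h2]⟩
    · exact ⟨-1, by norm_num, by simp [h1], by simp [h2]⟩
  set s : ℝ := ε * δ with hs
  have hs2 : s * s = 1 := by rw [hs]; nlinarith
  -- ρgᵀ u = (ε δ) • u
  have hTu : Matrix.toEuclideanLin (ρ g)ᵀ u = s • u := by
    have := hδu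
    rw [hεu, _root_.map_smul] at this
    have h2 := smul_cancel_of_sq hε this
    rw [h2, smul_smul, hs]
  have hTv : Matrix.toEuclideanLin (ρ g)ᵀ v = s • v := by
    have := hδv
    rw [hεv, _root_.map_smul] at this
    have h2 := smul_cancel_of_sq hε this
    rw [h2, smul_smul, hs]
  -- apply ρ g
  have hgu2 : Matrix.toEuclideanLin (ρ g) u = s • u := by
    have := congrArg (Matrix.toEuclideanLin (ρ g)) hTu
    rw [← teMul, horth2 g, teOne, _root_.map_smul] at this
    exact smul_cancel_of_sq hs2 this.symm
  have hgv2 : Matrix.toEuclideanLin (ρ g) v = s • v := by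
    have := congrArg (Matrix.toEuclideanLin (ρ g)) hTv
    rw [← teMul, horth2 g, teOne, _root_.map_smul] at this
    exact smul_cancel_of_sq hs2 this.symm
  -- translate to mulVec
  have hmu : ρ g *ᵥ u = fun i => s * u i := by
    have := congrArg (WithLp.equiv 2 (Fin n → ℝ)) hgu2
    rw [WithLp.equiv_apply, Matrix.piLp_ofLp_toEuclideanLin, Matrix.toLin'_apply] at this
    exact this
  have hmv : ρ g *ᵥ v = fun i => s * v i := by
    have := congrArg (WithLp.equiv 2 (Fin n → ℝ)) hgv2
    rw [WithLp.equiv_apply, Matrix.piLp_ofLp_toEuclideanLin, Matrix.toLin'_apply] at this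
    exact this
  apply hg
  ext i j
  rw [Matrix.vecMulVec_apply, Matrix.vecMulVec_apply, hmu, hmv]
  show s * u i * (s * v j) = u i * v j
  linear_combination (u i * v j) * hs2
end

section
/- Let n, m ≥ 1 and let A₁, …, A_p : Matrix (Fin n) (Fin m) ℝ be nonzero matrices. If equality holds in the triangle inequality for the ℓ²-operator norm, i.e., ‖A₁ + ⋯ + A_p‖ = ‖A₁‖ + ⋯ + ‖A_p‖, then all the matrices share the same leading left and right singular vectors: there exist unit vectors u ∈ EuclideanSpace ℝ (Fin n) and v ∈ EuclideanSpace ℝ (Fin m) such that A_i *ᵥ v = ‖A_i‖ • u for every i = 1, …, p. -/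
open Matrix
open scoped Matrix.Norms.L2Operator

/-- If equality holds in the triangle inequality for the ℓ²-operator norm of a sum of
nonzero matrices `A 1, …, A p`, then the matrices all share the same leading left and
right singular vectors. -/
theorem shared_leading_singular_vectors_of_opNorm_sum_eq
    (n m p : ℕ) (hn : 1 ≤ n) (hm : 1 ≤ m) (hp : 1 ≤ p)
    (A : Fin p → Matrix (Fin n) (Fin m) ℝ)
    (hA : ∀ i, A i ≠ 0)
    (heq : ‖∑ i, A i‖ = ∑ i, ‖A i‖) :
    ∃ (u : EuclideanSpace ℝ (Fin n)) (v : EuclideanSpace ℝ (Fin m)),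
      ‖u‖ = 1 ∧ ‖v‖ = 1 ∧ ∀ i, Matrix.toEuclideanLin (A i) v = ‖A i‖ • u := by
  haveI : Nonempty (Fin m) := Fin.pos_iff_nonempty.mp hm
  haveI : Nonempty (Fin p) := Fin.pos_iff_nonempty.mp hp
  set g : Matrix (Fin n) (Fin m) ℝ →
      (EuclideanSpace ℝ (Fin m) →L[ℝ] EuclideanSpace ℝ (Fin n)) :=
    fun B => (Matrix.toEuclideanLin.trans LinearMap.toContinuousLinearMap) B with hg
  have hgnorm : ∀ B, ‖g B‖ = ‖B‖ := fun B => (Matrix.l2_opNorm_def B).symm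
  set S := ∑ i, A i with hS
  -- the operator norm of S is positive
  have hApos : ∀ i, 0 < ‖A i‖ := fun i => norm_pos_iff.mpr (hA i)
  have hSpos : 0 < ‖S‖ := by
    rw [heq]
    exact Finset.sum_pos (fun i _ => hApos i) Finset.univ_nonempty
  -- find a norm-attaining unit vector v
  obtain ⟨v, hv, hvmax⟩ := (isCompact_sphere (0 : EuclideanSpace ℝ (Fin m)) 1).exists_isMaxOn
    (NormedSpace.sphere_nonempty.mpr zero_le_one)
    ((g S).continuous.norm.continuousOn)
  have hv1 : ‖v‖ = 1 := by simpa using mem_sphere_zero_iff_norm.mp hv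
  have hattain : ‖g S v‖ = ‖S‖ := by
    refine le_antisymm (by simpa [hv1, hgnorm] using (g S).le_opNorm v) ?_
    rw [← hgnorm S]
    refine ContinuousLinearMap.opNorm_le_bound _ (norm_nonneg _) (fun x => ?_)
    rcases eq_or_ne x 0 with rfl | hx
    · simp
    · have hxs : ‖x‖⁻¹ • x ∈ Metric.sphere (0 : EuclideanSpace ℝ (Fin m)) 1 := by
        simp [norm_smul, norm_ne_zero_iff.mpr hx, inv_mul_cancel₀ (norm_ne_zero_iff.mpr hx)]
      have := hvmax hxs
      simp only [Set.mem_setOf_eq, _root_.map_smul, norm_smul, norm_inv, norm_norm] at this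
      have hx' : (0:ℝ) < ‖x‖ := norm_pos_iff.mpr hx
      calc ‖g S x‖ = ‖x‖ * (‖x‖⁻¹ * ‖g S x‖) := by field_simp
        _ ≤ ‖x‖ * ‖g S v‖ := by
            exact mul_le_mul_of_nonneg_left this hx'.le
        _ = ‖g S v‖ * ‖x‖ := mul_comm _ _
  -- each ‖g (A i) v‖ = ‖A i‖
  have hsum : g S v = ∑ i, g (A i) v := by
    simp [hg, hS, map_sum]
  have hle : ∀ i, ‖g (A i) v‖ ≤ ‖A i‖ := fun i => by
    simpa [hv1, hgnorm] using (g (A i)).le_opNorm v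
  have hchain : ∑ i, ‖A i‖ ≤ ∑ i, ‖g (A i) v‖ := by
    calc ∑ i, ‖A i‖ = ‖g S v‖ := by rw [hattain, heq]
      _ = ‖∑ i, g (A i) v‖ := by rw [hsum]
      _ ≤ ∑ i, ‖g (A i) v‖ := norm_sum_le _ _
  have heach : ∀ i, ‖g (A i) v‖ = ‖A i‖ := by
    intro i
    have := (Finset.sum_eq_sum_iff_of_le (fun i _ => hle i)).mp
      (le_antisymm (Finset.sum_le_sum fun i _ => hle i) hchain)
    exact this i (Finset.mem_univ i)
  have hnormsum : ‖∑ i, g (A i) v‖ = ∑ i, ‖g (A i) v‖ := by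
    rw [← hsum, hattain, heq]
    exact Finset.sum_congr rfl fun i _ => (heach i).symm
  -- equality in triangle inequality: each term is same ray with the sum
  have hray : ∀ i, SameRay ℝ (g (A i) v) (∑ j, g (A j) v) := by
    intro i
    have hrest : ‖g (A i) v + ∑ j ∈ Finset.univ.erase i, g (A j) v‖
        = ‖g (A i) v‖ + ‖∑ j ∈ Finset.univ.erase i, g (A j) v‖ := by
      have e1 : g (A i) v + ∑ j ∈ Finset.univ.erase i, g (A j) v = ∑ j, g (A j) v :=
        Finset.add_sum_erase _ (fun j => g (A j) v) (Finset.mem_univ i)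
      have h1 : ‖∑ j, g (A j) v‖ ≤ ‖g (A i) v‖ + ‖∑ j ∈ Finset.univ.erase i, g (A j) v‖ := by
        rw [← e1]; exact norm_add_le _ _
      have h2 : ‖g (A i) v‖ + ‖∑ j ∈ Finset.univ.erase i, g (A j) v‖
          ≤ ‖g (A i) v‖ + ∑ j ∈ Finset.univ.erase i, ‖g (A j) v‖ :=
        add_le_add_right (norm_sum_le _ _) _
      have h3 : ‖g (A i) v‖ + ∑ j ∈ Finset.univ.erase i, ‖g (A j) v‖ = ∑ j, ‖g (A j) v‖ :=
        Finset.add_sum_erase _ (fun j => ‖g (A j) v‖) (Finset.mem_univ i)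
      rw [e1]
      refine le_antisymm h1 ?_
      calc ‖g (A i) v‖ + ‖∑ j ∈ Finset.univ.erase i, g (A j) v‖
          ≤ ∑ j, ‖g (A j) v‖ := by rw [← h3]; exact h2
        _ = ‖∑ j, g (A j) v‖ := hnormsum.symm
    have hsr : SameRay ℝ (g (A i) v) (∑ j ∈ Finset.univ.erase i, g (A j) v) :=
      sameRay_iff_norm_add.mpr hrest
    have := (SameRay.refl (g (A i) v)).add_right hsr
    rwa [Finset.add_sum_erase _ (fun j => g (A j) v) (Finset.mem_univ i)] at this
  -- build u
  refine ⟨‖S‖⁻¹ • g S v, v, ?_, hv1, ?_⟩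
  · rw [norm_smul, norm_inv, Real.norm_eq_abs, abs_of_pos hSpos, hattain,
      inv_mul_cancel₀ hSpos.ne']
  · intro i
    have hsr := (hray i).norm_smul_eq
    rw [← hsum] at hsr
    have hkey : ‖A i‖ • g S v = ‖g S v‖ • g (A i) v := by
      rw [← heach i]; exact hsr
    have : Matrix.toEuclideanLin (A i) v = g (A i) v := rfl
    rw [this, smul_smul]
    rw [hattain] at hkey
    have h2 := congrArg (fun x => (‖S‖)⁻¹ • x) hkey
    simp only [smul_smul] at h2
    rw [inv_mul_cancel₀ hSpos.ne', one_smul] at h2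
    rw [← h2, mul_comm]
end

section
/- Let E = EuclideanSpace ℝ (Fin n), G a finite group, and ρ : G →* (E ≃ₗᵢ[ℝ] E) a group homomorphism into linear isometric equivalences. Let ν be a probability measure on E × E (modeling the joint distribution of a signal x and a noise ε) that is invariant under the diagonal action of G: for every g ∈ G, the pushforward of ν under (x, ε) ↦ (ρ g x, ρ g ε) equals ν. Let D : E → E be measurable such that (x, ε) ↦ ‖D(x + ε) − x‖ is ν-integrable. Then the group-averaged denoiser D_G(z) = (1/|G|) ∑_{g∈G} (ρ g)⁻¹ (D (ρ g z)) has expected reconstruction error no larger than that of D: ∫ ‖D_G(x + ε) − x‖ dν(x, ε) ≤ ∫ ‖D(x + ε) − x‖ dν(x, ε). -/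
open MeasureTheory

/-! The error of the conjugate `e⁻¹ ∘ D ∘ e` at `(x, ε)` equals the error of `D` at
`(e x, e ε)`, so by invariance of `ν` every conjugate of `D` has the same expected error as `D`.
The averaged error `‖D_G(x + ε) - x‖` is at most the mean of the conjugates' errors by the
triangle inequality, hence so is its integral. -/

section Averaging

variable {ι E : Type*} [Fintype ι] [Nonempty ι] [NormedAddCommGroup E] [NormedSpace ℝ E]

lemma norm_average_sub_le (f : ι → E) (x : E) :
    ‖(Fintype.card ι : ℝ)⁻¹ • ∑ i, f i - x‖ ≤ (Fintype.card ι : ℝ)⁻¹ * ∑ i, ‖f i - x‖ := by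
  have hcard : (Fintype.card ι : ℝ) ≠ 0 := Nat.cast_ne_zero.mpr Fintype.card_ne_zero
  have hx : (Fintype.card ι : ℝ)⁻¹ • ∑ _i : ι, x = x := by
    rw [Finset.sum_const, Finset.card_univ, ← Nat.cast_smul_eq_nsmul ℝ, smul_smul,
      inv_mul_cancel₀ hcard, one_smul]
  calc ‖(Fintype.card ι : ℝ)⁻¹ • ∑ i, f i - x‖
      = ‖(Fintype.card ι : ℝ)⁻¹ • ∑ i, (f i - x)‖ := by
        rw [Finset.sum_sub_distrib, smul_sub, hx]
    _ = (Fintype.card ι : ℝ)⁻¹ * ‖∑ i, (f i - x)‖ := by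
        rw [norm_smul, norm_inv, Real.norm_natCast]
    _ ≤ (Fintype.card ι : ℝ)⁻¹ * ∑ i, ‖f i - x‖ := by gcongr; exact norm_sum_le _ _

lemma integral_norm_average_sub_le {Ω : Type*} [MeasurableSpace Ω] {μ : Measure Ω}
    (f : ι → Ω → E) (X : Ω → E) {c : ℝ}
    (hf : ∀ i, Integrable (fun ω => ‖f i ω - X ω‖) μ)
    (hc : ∀ i, ∫ ω, ‖f i ω - X ω‖ ∂μ = c) :
    ∫ ω, ‖(Fintype.card ι : ℝ)⁻¹ • ∑ i, f i ω - X ω‖ ∂μ ≤ c := by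
  have hcard : (Fintype.card ι : ℝ) ≠ 0 := Nat.cast_ne_zero.mpr Fintype.card_ne_zero
  calc ∫ ω, ‖(Fintype.card ι : ℝ)⁻¹ • ∑ i, f i ω - X ω‖ ∂μ
      ≤ ∫ ω, (Fintype.card ι : ℝ)⁻¹ * ∑ i, ‖f i ω - X ω‖ ∂μ :=
        integral_mono_of_nonneg (.of_forall fun _ => norm_nonneg _)
          ((integrable_finsetSum _ fun i _ => hf i).const_mul _)
          (.of_forall fun ω => norm_average_sub_le (f · ω) (X ω))
    _ = c := by
        rw [integral_const_mul, integral_finsetSum _ fun i _ => hf i]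
        simp only [hc, Finset.sum_const, Finset.card_univ, nsmul_eq_mul]
        field_simp

end Averaging

section Conjugation

variable {E : Type*} [NormedAddCommGroup E] [NormedSpace ℝ E]

lemma norm_conj_apply_sub (e : E ≃ₗᵢ[ℝ] E) (D : E → E) (x ε : E) :
    ‖e⁻¹ (D (e (x + ε))) - x‖ = ‖D (e x + e ε) - e x‖ := by
  rw [← e.norm_map, map_sub, LinearIsometryEquiv.coe_inv, e.apply_symm_apply, map_add]

variable [MeasurableSpace E] [BorelSpace E] {ν : Measure (E × E)} (e : E ≃ₗᵢ[ℝ] E) (D : E → E)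

def LinearIsometryEquiv.diagMeasurableEquiv : E × E ≃ᵐ E × E :=
  e.toHomeomorph.toMeasurableEquiv.prodCongr e.toHomeomorph.toMeasurableEquiv

variable {e}

lemma measurePreserving_diagMeasurableEquiv (hν : ν.map (fun p => (e p.1, e p.2)) = ν) :
    MeasurePreserving e.diagMeasurableEquiv ν ν :=
  ⟨e.diagMeasurableEquiv.measurable, hν⟩

lemma integrable_norm_conj_apply_sub_iff (hν : ν.map (fun p => (e p.1, e p.2)) = ν) :
    Integrable (fun p : E × E => ‖e⁻¹ (D (e (p.1 + p.2))) - p.1‖) ν ↔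
      Integrable (fun p : E × E => ‖D (p.1 + p.2) - p.1‖) ν := by
  simp only [norm_conj_apply_sub]
  exact (measurePreserving_diagMeasurableEquiv hν).integrable_comp_emb
    e.diagMeasurableEquiv.measurableEmbedding (g := fun p : E × E => ‖D (p.1 + p.2) - p.1‖)

lemma integral_norm_conj_apply_sub (hν : ν.map (fun p => (e p.1, e p.2)) = ν) :
    ∫ p : E × E, ‖e⁻¹ (D (e (p.1 + p.2))) - p.1‖ ∂ν = ∫ p : E × E, ‖D (p.1 + p.2) - p.1‖ ∂ν := by
  simp only [norm_conj_apply_sub]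
  exact (measurePreserving_diagMeasurableEquiv hν).integral_comp'
    (g := fun p : E × E => ‖D (p.1 + p.2) - p.1‖)

end Conjugation

theorem group_average_expected_error_le_general
    (n : ℕ)
    (G : Type*) [Group G] [Fintype G]
    (ρ : G →* (EuclideanSpace ℝ (Fin n) ≃ₗᵢ[ℝ] EuclideanSpace ℝ (Fin n)))
    (ν : Measure (EuclideanSpace ℝ (Fin n) × EuclideanSpace ℝ (Fin n)))
    (hinv : ∀ g : G, ν.map (fun p => (ρ g p.1, ρ g p.2)) = ν)
    (D : EuclideanSpace ℝ (Fin n) → EuclideanSpace ℝ (Fin n))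
    (hint : Integrable (fun p : EuclideanSpace ℝ (Fin n) × EuclideanSpace ℝ (Fin n) =>
      ‖D (p.1 + p.2) - p.1‖) ν) :
    ∫ p : EuclideanSpace ℝ (Fin n) × EuclideanSpace ℝ (Fin n),
        ‖((Fintype.card G : ℝ)⁻¹ • ∑ g : G, (ρ g)⁻¹ (D (ρ g (p.1 + p.2)))) - p.1‖ ∂ν
      ≤ ∫ p : EuclideanSpace ℝ (Fin n) × EuclideanSpace ℝ (Fin n),
          ‖D (p.1 + p.2) - p.1‖ ∂ν :=
  integral_norm_average_sub_le (μ := ν) (fun g p => (ρ g)⁻¹ (D (ρ g (p.1 + p.2)))) Prod.fst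
    (fun g => (integrable_norm_conj_apply_sub_iff D (hinv g)).mpr hint)
    (fun g => integral_norm_conj_apply_sub D (hinv g))

/-- If the joint distribution `ν` of signal and noise is invariant under the diagonal
action of a finite group `G` acting by linear isometries, then the Reynolds-averaged
denoiser `D_G` has expected reconstruction error no larger than that of `D`. -/
theorem group_average_expected_error_le
    (n : ℕ)
    (G : Type*) [Group G] [Fintype G]
    (ρ : G →* (EuclideanSpace ℝ (Fin n) ≃ₗᵢ[ℝ] EuclideanSpace ℝ (Fin n)))
    (ν : Measure (EuclideanSpace ℝ (Fin n) × EuclideanSpace ℝ (Fin n)))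
    [IsProbabilityMeasure ν]
    (hinv : ∀ g : G, ν.map (fun p => (ρ g p.1, ρ g p.2)) = ν)
    (D : EuclideanSpace ℝ (Fin n) → EuclideanSpace ℝ (Fin n))
    (hDmeas : Measurable D)
    (hint : Integrable (fun p : EuclideanSpace ℝ (Fin n) × EuclideanSpace ℝ (Fin n) =>
      ‖D (p.1 + p.2) - p.1‖) ν) :
    ∫ p : EuclideanSpace ℝ (Fin n) × EuclideanSpace ℝ (Fin n),
        ‖((Fintype.card G : ℝ)⁻¹ • ∑ g : G, (ρ g)⁻¹ (D (ρ g (p.1 + p.2)))) - p.1‖ ∂ν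
      ≤ ∫ p : EuclideanSpace ℝ (Fin n) × EuclideanSpace ℝ (Fin n),
          ‖D (p.1 + p.2) - p.1‖ ∂ν :=
  group_average_expected_error_le_general n G ρ ν hinv D hint
end

section
/- Let n ≥ 1, G a finite group, and ρ : G → Matrix (Fin n) (Fin n) ℝ a group homomorphism into orthogonal matrices. Let P : Matrix (Fin n) (Fin n) ℝ and suppose P is not G-equivariant, i.e., there exists g ∈ G with ρ(g)ᵀ * P * ρ(g) ≠ P. Then the G-averaged perturbation P_G = (1/|G|) ∑_{g∈G} ρ(g)ᵀ * P * ρ(g) satisfies the strict inequality ‖P_G‖_F < ‖P‖_F in Frobenius norm (in particular ‖P_G‖_F² < ‖P‖_F²). -/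
open Matrix

/-- The Frobenius norm `‖A‖_F = √(∑ i j, (A i j)²)` of a real square matrix. -/
noncomputable def frobeniusNorm {n : ℕ} (A : Matrix (Fin n) (Fin n) ℝ) : ℝ :=
  Real.sqrt (∑ i, ∑ j, (A i j) ^ 2)

namespace FrobAux
variable {n : ℕ}

noncomputable def ip (A B : Matrix (Fin n) (Fin n) ℝ) : ℝ := ∑ i, ∑ j, A i j * B i j

lemma ip_eq_trace (A B : Matrix (Fin n) (Fin n) ℝ) : ip A B = (Aᵀ * B).trace := by
  simp only [ip, Matrix.trace, Matrix.diag, Matrix.mul_apply, Matrix.transpose_apply]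
  exact Finset.sum_comm

lemma ip_comm (A B : Matrix (Fin n) (Fin n) ℝ) : ip A B = ip B A := by
  simp only [ip, mul_comm]

lemma ip_conj (Q A B : Matrix (Fin n) (Fin n) ℝ) (hQ : Qᵀ * Q = 1) :
    ip (Qᵀ * A * Q) (Qᵀ * B * Q) = ip A B := by
  have hQ' : Q * Qᵀ = 1 := mul_eq_one_comm.mp hQ
  rw [ip_eq_trace, ip_eq_trace]
  have key : (Qᵀ * A * Q)ᵀ * (Qᵀ * B * Q) = Qᵀ * (Aᵀ * (B * Q)) := by
    simp only [transpose_mul, transpose_transpose, Matrix.mul_assoc]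
    rw [← Matrix.mul_assoc Q Qᵀ (B * Q), hQ', Matrix.one_mul]
  rw [key, Matrix.trace_mul_comm, Matrix.mul_assoc Aᵀ (B * Q) Qᵀ,
    Matrix.mul_assoc B Q Qᵀ, hQ', Matrix.mul_one]

lemma ip_sum_right {ι : Type*} (s : Finset ι) (A : Matrix (Fin n) (Fin n) ℝ)
    (f : ι → Matrix (Fin n) (Fin n) ℝ) :
    ip A (∑ k ∈ s, f k) = ∑ k ∈ s, ip A (f k) := by
  simp only [ip, Matrix.sum_apply, Finset.mul_sum]
  have h1 : ∀ i, (∑ j, ∑ k ∈ s, A i j * f k i j) = ∑ k ∈ s, ∑ j, A i j * f k i j :=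
    fun i => Finset.sum_comm
  rw [Finset.sum_congr rfl (fun i _ => h1 i), Finset.sum_comm]

lemma ip_sum_left {ι : Type*} (s : Finset ι) (A : Matrix (Fin n) (Fin n) ℝ)
    (f : ι → Matrix (Fin n) (Fin n) ℝ) :
    ip (∑ k ∈ s, f k) A = ∑ k ∈ s, ip (f k) A := by
  rw [ip_comm, ip_sum_right]; simp only [ip_comm]

lemma ip_smul_left (c : ℝ) (A B : Matrix (Fin n) (Fin n) ℝ) :
    ip (c • A) B = c * ip A B := by
  simp only [ip, Matrix.smul_apply, smul_eq_mul, Finset.mul_sum, mul_assoc]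

lemma ip_smul_right (c : ℝ) (A B : Matrix (Fin n) (Fin n) ℝ) :
    ip A (c • B) = c * ip A B := by
  rw [ip_comm, ip_smul_left, ip_comm]

lemma ip_sub_left (A B C : Matrix (Fin n) (Fin n) ℝ) :
    ip (A - B) C = ip A C - ip B C := by
  simp only [ip, Matrix.sub_apply, sub_mul, Finset.sum_sub_distrib]

lemma ip_sub_right (A B C : Matrix (Fin n) (Fin n) ℝ) :
    ip A (B - C) = ip A B - ip A C := by
  rw [ip_comm, ip_sub_left, ip_comm A B, ip_comm A C]

lemma ip_self_nonneg (A : Matrix (Fin n) (Fin n) ℝ) : 0 ≤ ip A A :=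
  Finset.sum_nonneg fun i _ => Finset.sum_nonneg fun j _ => mul_self_nonneg _

lemma ip_self_pos (A : Matrix (Fin n) (Fin n) ℝ) (hA : A ≠ 0) : 0 < ip A A := by
  rcases (by
    by_contra h
    push_neg at h
    exact hA (Matrix.ext fun i j => h i j) : ∃ i j, A i j ≠ 0) with ⟨i, j, hij⟩
  have h1 : 0 < ∑ j', A i j' * A i j' :=
    Finset.sum_pos' (fun _ _ => mul_self_nonneg _)
      ⟨j, Finset.mem_univ j, mul_self_pos.mpr hij⟩
  exact Finset.sum_pos' (fun _ _ => Finset.sum_nonneg fun _ _ => mul_self_nonneg _)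
    ⟨i, Finset.mem_univ i, h1⟩

end FrobAux

open FrobAux

/-- If `P` is not `G`-equivariant (i.e. `ρ(g)ᵀ * P * ρ(g) ≠ P` for some `g`), then the
`G`-averaged perturbation `P_G = (1/|G|) ∑_g ρ(g)ᵀ * P * ρ(g)` has strictly smaller
Frobenius norm than `P`. -/
theorem frobeniusNorm_group_average_lt_of_not_equivariant
    (n : ℕ) (hn : 1 ≤ n)
    (G : Type*) [Group G] [Fintype G]
    (ρ : G →* Matrix (Fin n) (Fin n) ℝ)
    (hρ : ∀ g : G, (ρ g)ᵀ * ρ g = 1)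
    (P : Matrix (Fin n) (Fin n) ℝ)
    (hP : ∃ g : G, (ρ g)ᵀ * P * ρ g ≠ P) :
    frobeniusNorm ((Fintype.card G : ℝ)⁻¹ • ∑ g : G, (ρ g)ᵀ * P * ρ g)
      < frobeniusNorm P := by
  classical
  set Φ : G → Matrix (Fin n) (Fin n) ℝ := fun g => (ρ g)ᵀ * P * ρ g with hΦ
  set T : Matrix (Fin n) (Fin n) ℝ := ∑ g : G, Φ g with hT
  set c : ℝ := (Fintype.card G : ℝ) with hc
  have hcpos : 0 < c := by
    have : 0 < Fintype.card G := Fintype.card_pos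
    rw [hc]; exact_mod_cast this
  have hcne : c ≠ 0 := ne_of_gt hcpos
  -- conjugation composition
  have hconj : ∀ g h : G, (ρ h)ᵀ * Φ g * ρ h = Φ (g * h) := by
    intro g h
    simp only [hΦ, _root_.map_mul, transpose_mul, Matrix.mul_assoc]
  have hΦone : Φ 1 = P := by
    simp [hΦ]
  -- invariance of ip under conjugation
  have hip : ∀ (g : G) (A B : Matrix (Fin n) (Fin n) ℝ),
      ip ((ρ g)ᵀ * A * ρ g) ((ρ g)ᵀ * B * ρ g) = ip A B := fun g A B =>
    ip_conj (ρ g) A B (hρ g)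
  have hF2 : ∀ g h : G, ip (Φ g) (Φ h) = ip P (Φ (h * g⁻¹)) := by
    intro g h
    have := hip g⁻¹ (Φ g) (Φ h)
    rw [hconj g g⁻¹, hconj h g⁻¹, mul_inv_cancel, hΦone] at this
    exact this.symm
  -- ip T T = c * ip P T
  have hPT : ∀ g : G, ip (Φ g) T = ip P T := by
    intro g
    rw [hT, ip_sum_right, ip_sum_right]
    exact Fintype.sum_equiv (Equiv.mulRight g⁻¹) _ _ (fun h => hF2 g h)
  have hTT : ip T T = c * ip P T := by
    rw [hT, ip_sum_left]
    simp only [← hT, hPT]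
    rw [Finset.sum_const, Finset.card_univ, nsmul_eq_mul, hc]
  -- T is G-equivariant
  have hTequi : ∀ h : G, (ρ h)ᵀ * T * ρ h = T := by
    intro h
    rw [hT, Matrix.mul_sum, Matrix.sum_mul]
    simp only [hconj]
    exact Fintype.sum_equiv (Equiv.mulRight h) _ _ (fun g => rfl)
  set A : Matrix (Fin n) (Fin n) ℝ := c⁻¹ • T with hA
  -- P ≠ A
  have hne : P ≠ A := by
    obtain ⟨g, hg⟩ := hP
    intro hPA
    apply hg
    show (ρ g)ᵀ * P * ρ g = P
    rw [hPA, hA, Matrix.mul_smul, Matrix.smul_mul, hTequi g]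
  have hipA : ip A A = c⁻¹ * ip P T := by
    rw [hA, ip_smul_left, ip_smul_right, hTT]
    field_simp
  have hipPA : ip P A = c⁻¹ * ip P T := by
    rw [hA, ip_smul_right]
  have hsub : ip (P - A) (P - A) = ip P P - ip A A := by
    rw [ip_sub_left, ip_sub_right, ip_sub_right, ip_comm A P, hipA, hipPA]
    ring
  have hpos : 0 < ip (P - A) (P - A) :=
    ip_self_pos _ (sub_ne_zero.mpr hne)
  have hlt : ip A A < ip P P := by linarith [hsub ▸ hpos]
  have hfrob : ∀ B : Matrix (Fin n) (Fin n) ℝ, frobeniusNorm B = Real.sqrt (ip B B) := by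
    intro B
    simp [frobeniusNorm, ip, sq]
  rw [hfrob, hfrob]
  exact Real.sqrt_lt_sqrt (ip_self_nonneg A) hlt
end
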